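/- For every x ∈ ℝ, the function s ↦ q(s)² is integrable on [x, ∞), and ∫_x^∞ q(s)² ds = (q'(x))² − x·(q(x))² − (q(x))⁴. -/

import Mathlib

open MeasureTheory Filter Real Topology Set

/-! The quantity `g = x q² + q⁴ - q'²` satisfies `g' = q²` along any solution of Painlevé II,
so `∫_x^∞ q² = lim g - g(x)`. The Airy-type decay of `q` forces `q`, `x q` and `q''` to tend
to `0`, and then so does `q'` (interpolating between `q` and `q''`), hence `g → 0`. -/

/-- The Airy-function scale: `Ai(x) · airyScale x → 1` as `x → ∞`. -/
noncomputable def airyScale (x : ℝ) : ℝ :=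
  2 * √π * x ^ ((1 : ℝ) / 4) * exp ((2 / 3) * x ^ ((3 : ℝ) / 2))

lemma exp_le_airyScale {y : ℝ} (hy : 1 ≤ y) : exp ((2 / 3) * y) ≤ airyScale y := by
  have h_sqrt : 1 ≤ √π := Real.one_le_sqrt.2 (by linarith [pi_gt_three])
  have h_root : 1 ≤ y ^ ((1 : ℝ) / 4) := one_le_rpow hy (by norm_num)
  have h_pow : y ≤ y ^ ((3 : ℝ) / 2) := by
    simpa using rpow_le_rpow_of_exponent_le hy (by norm_num : (1 : ℝ) ≤ 3 / 2)
  calc exp ((2 / 3) * y) ≤ 1 * exp ((2 / 3) * y ^ ((3 : ℝ) / 2)) := by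
        rw [one_mul]; gcongr
    _ ≤ airyScale y := by
        unfold airyScale
        gcongr
        nlinarith

lemma airyScale_pos {y : ℝ} (hy : 1 ≤ y) : 0 < airyScale y :=
  (exp_pos _).trans_le (exp_le_airyScale hy)

lemma tendsto_rpow_div_airyScale (s : ℝ) :
    Tendsto (fun y => y ^ s / airyScale y) atTop (𝓝 0) := by
  refine squeeze_zero' ?_ ?_ (tendsto_rpow_mul_exp_neg_mul_atTop_nhds_zero s (2 / 3) (by norm_num))
  · filter_upwards [eventually_ge_atTop 1] with y hy
    have := airyScale_pos hy
    positivity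
  · filter_upwards [eventually_ge_atTop 1] with y hy
    rw [div_eq_mul_inv, neg_mul, exp_neg]
    exact mul_le_mul_of_nonneg_left (inv_anti₀ (exp_pos _) (exp_le_airyScale hy))
      (rpow_nonneg (by linarith) s)

lemma tendsto_rpow_mul_of_tendsto_mul_airyScale {q : ℝ → ℝ} {a : ℝ}
    (h : Tendsto (fun y => q y * airyScale y) atTop (𝓝 a)) (s : ℝ) :
    Tendsto (fun y => y ^ s * q y) atTop (𝓝 0) := by
  have := h.mul (tendsto_rpow_div_airyScale s)
  rw [mul_zero] at this
  refine this.congr' ?_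
  filter_upwards [eventually_ge_atTop 1] with y hy
  field_simp [(airyScale_pos hy).ne']

lemma tendsto_deriv_atTop_of_tendsto_of_tendsto_deriv_deriv {f : ℝ → ℝ}
    (hf : Differentiable ℝ f) (hf' : Differentiable ℝ (deriv f))
    (h0 : Tendsto f atTop (𝓝 0)) (h2 : Tendsto (deriv (deriv f)) atTop (𝓝 0)) :
    Tendsto (deriv f) atTop (𝓝 0) := by
  have h_slope (y : ℝ) : ∃ c ∈ Ioo y (y + 1), deriv f c = f (y + 1) - f y := by
    obtain ⟨c, hc, hfc⟩ := exists_deriv_eq_slope f (lt_add_one y) hf.continuous.continuousOn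
      hf.differentiableOn
    exact ⟨c, hc, by simpa using hfc⟩
  choose c hc hfc using h_slope
  have h_slope' (y : ℝ) : ∃ d ∈ Ioo y (c y),
      deriv (deriv f) d = (deriv f (c y) - deriv f y) / (c y - y) :=
    exists_deriv_eq_slope (deriv f) (hc y).1 hf'.continuous.continuousOn
      hf'.differentiableOn
  choose d hd hfd using h_slope'
  have hd_top : Tendsto d atTop atTop :=
    tendsto_atTop_mono (fun y => (hd y).1.le) tendsto_id
  have h_diff : Tendsto (fun y => f (y + 1) - f y) atTop (𝓝 0) := by
    simpa using (h0.comp (tendsto_atTop_add_const_right _ 1 tendsto_id)).sub h0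
  -- `f'(y) = (f(y+1) - f(y)) - f''(d) (c - y)` with `0 < c - y < 1`
  have h_err : Tendsto (fun y => deriv (deriv f) (d y) * (c y - y)) atTop (𝓝 0) := by
    have h2d : Tendsto (fun y => ‖deriv (deriv f) (d y)‖) atTop (𝓝 0) := by
      simpa using (h2.comp hd_top).norm
    refine squeeze_zero_norm (fun y => ?_) h2d
    have hcy : |c y - y| ≤ 1 := abs_le.2 ⟨by linarith [(hc y).1], by linarith [(hc y).2]⟩
    simpa [norm_mul] using mul_le_of_le_one_right (abs_nonneg _) hcy
  have h_sum := h_diff.sub h_err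
  rw [sub_zero] at h_sum
  refine h_sum.congr (fun y => ?_)
  have hcy : c y - y ≠ 0 := sub_ne_zero.2 (hc y).1.ne'
  rw [← hfc, hfd, div_mul_cancel₀ _ hcy]
  ring

section PainleveII

variable {q : ℝ → ℝ} (hq1 : Differentiable ℝ q) (hq2 : Differentiable ℝ (deriv q))
  (hPII : ∀ x : ℝ, deriv (deriv q) x = 2 * (q x) ^ 3 + x * q x)
include hq1 hq2 hPII

lemma hasDerivAt_painleveII_first_integral (y : ℝ) :
    HasDerivAt (fun t => t * q t ^ 2 + q t ^ 4 - deriv q t ^ 2) (q y ^ 2) y := by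
  have hq := (hq1 y).hasDerivAt
  have hq' : HasDerivAt (deriv q) (2 * q y ^ 3 + y * q y) y := hPII y ▸ (hq2 y).hasDerivAt
  exact ((((hasDerivAt_id y).mul (hq.pow 2)).add (hq.pow 4)).sub (hq'.pow 2)).congr_deriv
    (by simp only [id, Pi.pow_apply]; ring)

end PainleveII

theorem R_local_expression
    (q : ℝ → ℝ)
    (hq1 : Differentiable ℝ q)
    (hq2 : Differentiable ℝ (deriv q))
    (hPII : ∀ x : ℝ, deriv (deriv q) x = 2 * (q x) ^ 3 + x * q x)
    (hasymp : Tendsto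
      (fun x : ℝ => q x * (2 * Real.sqrt π * x ^ ((1 : ℝ) / 4) *
        Real.exp ((2 / 3) * x ^ ((3 : ℝ) / 2))))
      atTop (nhds 1))
    (x : ℝ) :
    IntegrableOn (fun s => (q s) ^ 2) (Set.Ici x) ∧
    ∫ s in Set.Ici x, (q s) ^ 2 = (deriv q x) ^ 2 - x * (q x) ^ 2 - (q x) ^ 4 := by
  have hq0 : Tendsto q atTop (𝓝 0) := by
    simpa using tendsto_rpow_mul_of_tendsto_mul_airyScale hasymp 0
  have hxq : Tendsto (fun y => y * q y) atTop (𝓝 0) := by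
    simpa using tendsto_rpow_mul_of_tendsto_mul_airyScale hasymp 1
  have hq'' : Tendsto (deriv (deriv q)) atTop (𝓝 0) := by
    simpa [funext hPII] using ((hq0.pow 3).const_mul 2).add hxq
  have hq' := tendsto_deriv_atTop_of_tendsto_of_tendsto_deriv_deriv hq1 hq2 hq0 hq''
  have hg : Tendsto (fun t => t * q t ^ 2 + q t ^ 4 - deriv q t ^ 2) atTop (𝓝 0) := by
    simpa [pow_two, mul_assoc] using ((hxq.mul hq0).add (hq0.pow 4)).sub (hq'.pow 2)
  have hderiv := fun t (_ : t ∈ Ici x) => hasDerivAt_painleveII_first_integral hq1 hq2 hPII t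
  have hnonneg := fun t (_ : t ∈ Ioi x) => sq_nonneg (q t)
  refine ⟨(integrableOn_Ici_iff_integrableOn_Ioi).2
    (integrableOn_Ioi_deriv_of_nonneg' hderiv hnonneg hg), ?_⟩
  rw [integral_Ici_eq_integral_Ioi, integral_Ioi_of_hasDerivAt_of_nonneg' hderiv hnonneg hg]
  ring
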